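/- arXiv:math/0611055 — 2 statements merged into one kernel-verified Lean document; each statement's English description precedes it below -/
import Mathlib

section
/- Let (W, I) be a Coxeter group and let u, w ∈ W. The set {v w : v ≤ u} (Bruhat order) contains a unique maximal element y' with respect to Bruhat order; moreover ℓ(y') = ℓ(w) + ℓ(y' w⁻¹). -/
/-!
The greatest element is built along a reduced word of `u`. If `ℓ u < ℓ (s u)` and `v w` is
the greatest element of `{v' w | v' ≤ u}`, then the greatest element of `{v' w | v' ≤ s u}` is
`s v w` or `v w`, according as `s` raises or lowers the length of `v w`; the length identity
is carried along. The step rests on Deodhar's property Z: if `ℓ (s u) < ℓ u`, then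
`v ≤ u ↔ v ≤ s u ∨ s v ≤ s u`.

Property Z needs the subword property: a subword of one reduced word of `u` is a subword of
every word for `u`. Subwords of a reduced word are reached by chains of reflection steps that
lower the length, and by the strong exchange condition each step is realised, in any word for
the larger element, by deleting one letter. Strong exchange comes from the reflection cocycle, a homomorphism
`W → (W → ℤˣ) ⋊ W` whose sign at `t` on the product of a word `ω` is `-1` to the number of
occurrences of `t` in the left inversion sequence of `ω`. For a left inversion `t` of `w`, this
sign is `-1`: write `w = t (t w)`; the sign of `t` at `t` is `-1`, and `t` does not occur in
the left inversion sequence of a reduced word for `t w`.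
-/

open CoxeterSystem

variable {B W : Type*} [Group W] {M : CoxeterMatrix B}

/-- Bruhat order on a Coxeter group: `u ≤ w` iff some reduced word of `w` admits a
subword whose product is `u`. -/
def BruhatLE (cs : CoxeterSystem M W) (u w : W) : Prop :=
  ∃ ω : List B, cs.IsReduced ω ∧ w = cs.wordProd ω ∧
    ∃ ω' : List B, ω'.Sublist ω ∧ u = cs.wordProd ω'

def conjPrecomp : W →* MulAut (W → ℤˣ) :=
  mulAutArrow.comp (ConjAct.toConjAct : W ≃* ConjAct W).toMonoidHom

theorem conjPrecomp_apply (w : W) (f : W → ℤˣ) (t : W) :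
    conjPrecomp w f t = f (w⁻¹ * t * w) := by
  change f ((ConjAct.toConjAct w)⁻¹ • t) = _
  rw [← ConjAct.toConjAct_inv, ConjAct.toConjAct_smul, inv_inv]

namespace CoxeterSystem

variable (cs : CoxeterSystem M W)

local prefix:100 "s " => cs.simple
local prefix:100 "π " => cs.wordProd
local prefix:100 "ℓ " => cs.length
local prefix:100 "lis " => cs.leftInvSeq

theorem leftInvSeq_alternatingWord_drop_eq_take (i j : B) :
    (lis (alternatingWord i j (2 * M i j))).drop (M i j)
      = (lis (alternatingWord i j (2 * M i j))).take (M i j) := by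
  refine List.ext_getElem (by simp; omega) fun k h₁ h₂ => ?_
  simp only [List.getElem_drop, List.getElem_take]
  simp only [List.length_drop, length_leftInvSeq, length_alternatingWord] at h₁
  rw [cs.getElem_leftInvSeq_alternatingWord i j _ _ (by omega),
    cs.getElem_leftInvSeq_alternatingWord i j _ _ (by omega),
    cs.prod_alternatingWord_eq_mul_pow, cs.prod_alternatingWord_eq_mul_pow]
  have h₁ : (2 * (M i j + k) + 1) / 2 = M i j + k := by omega
  have h₂ : (2 * k + 1) / 2 = k := by omega
  simp [h₁, h₂, pow_add]

section ReflectionSign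

variable [DecidableEq W]

def signLetter (i : B) : (W → ℤˣ) ⋊[conjPrecomp] W :=
  ⟨fun t => if t = s i then -1 else 1, s i⟩

theorem prod_map_signLetter (ω : List B) :
    (ω.map cs.signLetter).prod = ⟨fun t => (-1) ^ (lis ω).count t, π ω⟩ := by
  induction ω with
  | nil => rfl
  | cons i ω ih =>
    refine SemidirectProduct.ext (funext fun t => ?_) ?_
    · have hconj : t = MulAut.conj (s i) (s i * t * s i) := by
        simp [cs.inv_simple, mul_assoc]
      have hcount : ((lis ω).map (MulAut.conj (s i))).count t
          = (lis ω).count (s i * t * s i) := by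
        conv_lhs => rw [hconj]
        exact List.count_map_of_injective _ _ (MulAut.conj (s i)).injective _
      simp only [List.map_cons, List.prod_cons, ih, SemidirectProduct.mul_left, Pi.mul_apply,
        conjPrecomp_apply, leftInvSeq, List.count_cons, hcount]
      simp only [signLetter, cs.inv_simple, pow_add, beq_iff_eq]
      by_cases ht : t = s i
      · simp [ht, mul_comm]
      · simp [ht, Ne.symm ht]
    · simp [signLetter, ih, cs.wordProd_cons]

theorem isLiftable_signLetter : M.IsLiftable cs.signLetter := by
  intro i j
  have hpow : ∀ m : ℕ, (cs.signLetter i * cs.signLetter j) ^ m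
      = ((alternatingWord i j (2 * m)).map cs.signLetter).prod := by
    intro m
    induction m with
    | zero => rfl
    | succ m ih =>
      rw [pow_succ', ih, show 2 * (m + 1) = 2 * m + 1 + 1 by ring, alternatingWord_succ',
        alternatingWord_succ']
      simp [mul_assoc]
  rw [hpow, prod_map_signLetter]
  refine SemidirectProduct.ext (funext fun t => ?_) ?_
  · show (-1 : ℤˣ) ^ (lis _).count t = 1
    rw [← List.take_append_drop (M i j) (lis _), List.count_append,
      leftInvSeq_alternatingWord_drop_eq_take, ← two_mul, pow_mul]
    simp
  · rw [cs.prod_alternatingWord_eq_mul_pow]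
    simp [cs.simple_mul_simple_pow]

def reflectionSign : W →* (W → ℤˣ) ⋊[conjPrecomp] W :=
  cs.lift ⟨cs.signLetter, cs.isLiftable_signLetter⟩

theorem reflectionSign_wordProd (ω : List B) :
    cs.reflectionSign (π ω) = ⟨fun t => (-1) ^ (lis ω).count t, π ω⟩ := by
  rw [← prod_map_signLetter, wordProd, map_list_prod, List.map_map]
  congr 2
  funext i
  exact cs.lift_apply_simple cs.isLiftable_signLetter i

theorem reflectionSign_right (w : W) : (cs.reflectionSign w).right = w := by
  obtain ⟨ω, -, rfl⟩ := cs.exists_isReduced w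
  rw [reflectionSign_wordProd]

theorem reflectionSign_left_self {t : W} (ht : cs.IsReflection t) :
    (cs.reflectionSign t).left t = -1 := by
  obtain ⟨x, i, rfl⟩ := ht
  have hs : (cs.reflectionSign (s i)).left (s i) = -1 := by
    simp [reflectionSign, cs.lift_apply_simple cs.isLiftable_signLetter, signLetter]
  have e₁ : x⁻¹ * (x * s i * x⁻¹) * x = s i := by group
  have e₂ : x * ((x * s i)⁻¹ * (x * s i * x⁻¹) * (x * s i)) * x⁻¹ = x * s i * x⁻¹ := by
    simp [mul_assoc, cs.inv_simple]
  rw [map_mul, map_mul, map_inv]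
  simp only [SemidirectProduct.mul_left, SemidirectProduct.inv_left, SemidirectProduct.mul_right,
    Pi.mul_apply, Pi.inv_apply, conjPrecomp_apply, reflectionSign_right, inv_inv, e₁, e₂, hs,
    mul_inv_cancel_comm]

theorem reflectionSign_left_of_isLeftInversion {w t : W} (h : cs.IsLeftInversion w t) :
    (cs.reflectionSign w).left t = -1 := by
  obtain ⟨ht, hlt⟩ := h
  obtain ⟨κ, hκ, hκw⟩ := cs.exists_isReduced (t * w)
  have hnot : t ∉ lis κ := fun hmem => by
    have := (cs.isLeftInversion_of_mem_leftInvSeq hκ hmem).2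
    rw [← hκw, ← mul_assoc, ht.mul_self, one_mul] at this
    omega
  have hw : w = t * π κ := by rw [← hκw, ← mul_assoc, ht.mul_self, one_mul]
  rw [hw, map_mul, SemidirectProduct.mul_left, Pi.mul_apply, conjPrecomp_apply,
    reflectionSign_right, reflectionSign_left_self cs ht, ht.inv, ht.mul_self, one_mul,
    reflectionSign_wordProd]
  simp [List.count_eq_zero.mpr hnot]

end ReflectionSign

theorem mem_leftInvSeq_of_isLeftInversion {ω : List B} {t : W}
    (h : cs.IsLeftInversion (π ω) t) : t ∈ lis ω := by
  classical
  by_contra hnot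
  have := cs.reflectionSign_left_of_isLeftInversion h
  rw [reflectionSign_wordProd] at this
  simp [List.count_eq_zero.mpr hnot] at this

theorem exists_wordProd_eraseIdx_eq_of_isLeftInversion {ω : List B} {t : W}
    (h : cs.IsLeftInversion (π ω) t) : ∃ k, π (ω.eraseIdx k) = t * π ω := by
  obtain ⟨k, hk, rfl⟩ := List.mem_iff_getElem.mp (cs.mem_leftInvSeq_of_isLeftInversion h)
  exact ⟨k, by rw [← getD_leftInvSeq_mul_wordProd, List.getD_eq_getElem]⟩

theorem isReduced_cons_iff (i : B) (ω : List B) :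
    cs.IsReduced (i :: ω) ↔ cs.IsReduced ω ∧ ℓ (π ω) < ℓ (s i * π ω) := by
  have hle := cs.length_wordProd_le ω
  rcases cs.length_simple_mul (π ω) i with h | h <;>
    simp only [IsReduced, wordProd_cons, List.length_cons] <;> omega

/-- The Bruhat order is the reflexive-transitive closure of this relation. -/
def BruhatStep (x y : W) : Prop := ∃ t, cs.IsLeftInversion y t ∧ x = t * y

variable {cs}

theorem BruhatStep.length_lt {x y : W} (h : cs.BruhatStep x y) : ℓ x < ℓ y := by
  obtain ⟨t, ⟨-, hlt⟩, rfl⟩ := h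
  exact hlt

theorem bruhatStep_simple_mul {y : W} {i : B} (h : ℓ y < ℓ (s i * y)) :
    cs.BruhatStep y (s i * y) :=
  ⟨s i, ⟨cs.isReflection_simple i, by rwa [cs.simple_mul_simple_cancel_left]⟩,
    (cs.simple_mul_simple_cancel_left i).symm⟩

theorem BruhatStep.simple_mul {x y : W} {i : B} (h : cs.BruhatStep x y)
    (hlt : ℓ (s i * x) < ℓ (s i * y)) : cs.BruhatStep (s i * x) (s i * y) := by
  obtain ⟨t, ⟨ht, -⟩, rfl⟩ := h
  have hconj : s i * t * s i * (s i * y) = s i * (t * y) := by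
    simp [mul_assoc, cs.simple_mul_simple_cancel_left]
  refine ⟨s i * t * s i, ⟨?_, by rwa [hconj]⟩, hconj.symm⟩
  simpa [cs.inv_simple] using ht.conj (s i)

/-- Strong exchange in the word `i :: ρ` for `y` deletes either the letter `i`, giving
`s i * x = y`, or a letter of a reduced word `ρ` for `s i * y`. -/
theorem BruhatStep.simple_mul_eq_or_length_lt {x y : W} (h : cs.BruhatStep x y) (i : B) :
    s i * x = y ∨ ℓ (s i * x) < ℓ (s i * y) := by
  obtain ⟨t, ht, rfl⟩ := h
  obtain ⟨ρ, hρ, hρy⟩ := cs.exists_isReduced (s i * y)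
  have hy : y = π (i :: ρ) := by rw [wordProd_cons, ← hρy, cs.simple_mul_simple_cancel_left]
  rw [hy] at ht
  obtain ⟨_ | k, hk⟩ := cs.exists_wordProd_eraseIdx_eq_of_isLeftInversion ht
  · left
    rw [List.eraseIdx_cons_zero, ← hy, ← hρy] at hk
    rw [← hk, cs.simple_mul_simple_cancel_left]
  · right
    rw [List.eraseIdx_cons_succ, wordProd_cons, ← hy] at hk
    have hne : ℓ (s i * (t * y)) ≠ ℓ (s i * y) := by
      have := (ht.1.conj (s i)).length_mul_right_ne (s i * y)
      simpa [cs.inv_simple, mul_assoc, cs.simple_mul_simple_cancel_left] using this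
    have hle : ℓ (s i * (t * y)) ≤ ℓ (s i * y) :=
      calc ℓ (s i * (t * y)) = ℓ (π (ρ.eraseIdx k)) := by
            rw [← hk, cs.simple_mul_simple_cancel_left]
        _ ≤ (ρ.eraseIdx k).length := cs.length_wordProd_le _
        _ ≤ ρ.length := (List.eraseIdx_sublist ρ k).length_le
        _ = ℓ (s i * y) := by rw [hρy, hρ]
    omega

open Relation

theorem reflTransGen_bruhatStep_simple_mul {x y : W} {i : B}
    (h : ReflTransGen cs.BruhatStep x y) (hy : ℓ y < ℓ (s i * y)) :
    ReflTransGen cs.BruhatStep (s i * x) (s i * y) := by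
  induction h using ReflTransGen.head_induction_on with
  | refl => exact .refl
  | @head x b hxb hby ih =>
    rcases cs.length_simple_mul b i with hb | hb
    · have hx : ℓ (s i * x) ≤ ℓ x + 1 := by
        have := cs.length_mul_le (s i) x
        rwa [cs.length_simple, add_comm] at this
      exact .head (hxb.simple_mul (by have := hxb.length_lt; omega)) ih
    · rcases hxb.simple_mul_eq_or_length_lt i with hx | hx
      · rw [hx]
        exact hby.tail (bruhatStep_simple_mul hy)
      · exact .head (hxb.simple_mul hx) ih

theorem reflTransGen_bruhatStep_of_sublist {τ ω : List B} (h : τ.Sublist ω)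
    (hω : cs.IsReduced ω) : ReflTransGen cs.BruhatStep (π τ) (π ω) := by
  induction h with
  | slnil => exact .refl
  | cons i _ ih =>
    obtain ⟨hω, hlt⟩ := (cs.isReduced_cons_iff i _).mp hω
    rw [wordProd_cons]
    exact (ih hω).tail (bruhatStep_simple_mul hlt)
  | cons_cons i _ ih =>
    obtain ⟨hω, hlt⟩ := (cs.isReduced_cons_iff i _).mp hω
    rw [wordProd_cons, wordProd_cons]
    exact reflTransGen_bruhatStep_simple_mul (ih hω) hlt

theorem exists_sublist_of_reflTransGen_bruhatStep {x y : W}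
    (h : ReflTransGen cs.BruhatStep x y) {ω : List B} (hω : π ω = y) :
    ∃ τ, τ.Sublist ω ∧ π τ = x := by
  induction h generalizing ω with
  | refl => exact ⟨ω, .refl ω, hω⟩
  | tail _ hby ih =>
    obtain ⟨t, ht, rfl⟩ := hby
    rw [← hω] at ht
    obtain ⟨k, hk⟩ := cs.exists_wordProd_eraseIdx_eq_of_isLeftInversion ht
    obtain ⟨τ, hτ, rfl⟩ := ih (hk.trans (by rw [hω]))
    exact ⟨τ, hτ.trans (List.eraseIdx_sublist ω k), rfl⟩

end CoxeterSystem

section Bruhat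

variable {cs : CoxeterSystem M W}

local prefix:100 "s " => cs.simple
local prefix:100 "π " => cs.wordProd
local prefix:100 "ℓ " => cs.length

theorem BruhatLE.exists_sublist {v u : W} (h : BruhatLE cs v u) {ω : List B} (hω : π ω = u) :
    ∃ τ, τ.Sublist ω ∧ π τ = v := by
  obtain ⟨κ, hκ, rfl, τ, hτ, rfl⟩ := h
  exact exists_sublist_of_reflTransGen_bruhatStep (reflTransGen_bruhatStep_of_sublist hτ hκ) hω

theorem BruhatLE.refl (v : W) : BruhatLE cs v v := by
  obtain ⟨ω, hω, rfl⟩ := cs.exists_isReduced v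
  exact ⟨ω, hω, rfl, ω, .refl ω, rfl⟩

theorem BruhatLE.length_le {v u : W} (h : BruhatLE cs v u) : ℓ v ≤ ℓ u := by
  obtain ⟨ω, hω, rfl, τ, hτ, rfl⟩ := h
  calc ℓ (π τ) ≤ τ.length := cs.length_wordProd_le τ
    _ ≤ ω.length := hτ.length_le
    _ = ℓ (π ω) := hω.symm

theorem BruhatLE.antisymm {x y : W} (hxy : BruhatLE cs x y) (hyx : BruhatLE cs y x) :
    x = y := by
  have hle := hyx.length_le
  obtain ⟨ω, hω, rfl, τ, hτ, rfl⟩ := hxy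
  have hω : ℓ (π ω) = ω.length := hω
  have hτω := hτ.length_le
  have hτ' := cs.length_wordProd_le τ
  rw [hτ.eq_of_length (by omega)]

theorem BruhatLE.le_simple_mul {v u : W} {i : B} (h : BruhatLE cs v u)
    (hu : ℓ u < ℓ (s i * u)) : BruhatLE cs v (s i * u) := by
  obtain ⟨ω, hω, rfl, τ, hτ, rfl⟩ := h
  exact ⟨i :: ω, (cs.isReduced_cons_iff i ω).mpr ⟨hω, hu⟩, (wordProd_cons cs i ω).symm,
    τ, hτ.cons i, rfl⟩

theorem BruhatLE.simple_mul_le_simple_mul {v u : W} {i : B} (h : BruhatLE cs v u)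
    (hu : ℓ u < ℓ (s i * u)) : BruhatLE cs (s i * v) (s i * u) := by
  obtain ⟨ω, hω, rfl, τ, hτ, rfl⟩ := h
  exact ⟨i :: ω, (cs.isReduced_cons_iff i ω).mpr ⟨hω, hu⟩, (wordProd_cons cs i ω).symm,
    i :: τ, hτ.cons_cons i, (wordProd_cons cs i τ).symm⟩

theorem bruhatLE_iff_of_length_simple_mul_lt {v u : W} {i : B} (hu : ℓ (s i * u) < ℓ u) :
    BruhatLE cs v u ↔ BruhatLE cs v (s i * u) ∨ BruhatLE cs (s i * v) (s i * u) := by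
  have hsu : ℓ (s i * u) < ℓ (s i * (s i * u)) := by rwa [cs.simple_mul_simple_cancel_left]
  constructor
  · intro h
    obtain ⟨ρ, hρ, hρu⟩ := cs.exists_isReduced (s i * u)
    have hiρ : π (i :: ρ) = u := by rw [wordProd_cons, ← hρu, cs.simple_mul_simple_cancel_left]
    obtain ⟨τ, hτ, rfl⟩ := h.exists_sublist hiρ
    rcases List.sublist_cons_iff.mp hτ with hτρ | ⟨τ', rfl, hτ'ρ⟩
    · exact .inl ⟨ρ, hρ, hρu, τ, hτρ, rfl⟩
    · refine .inr ⟨ρ, hρ, hρu, τ', hτ'ρ, ?_⟩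
      rw [wordProd_cons, cs.simple_mul_simple_cancel_left]
  · rintro (h | h)
    · simpa [cs.simple_mul_simple_cancel_left] using h.le_simple_mul hsu
    · simpa [cs.simple_mul_simple_cancel_left] using h.simple_mul_le_simple_mul hsu

theorem simple_mul_bruhatLE_iff {v u : W} {i : B} (hu : ℓ (s i * u) < ℓ u) :
    BruhatLE cs (s i * v) u ↔ BruhatLE cs v u := by
  rw [bruhatLE_iff_of_length_simple_mul_lt hu, bruhatLE_iff_of_length_simple_mul_lt hu,
    cs.simple_mul_simple_cancel_left, or_comm]

variable (cs) in
def IsBruhatGreatestMul (u w v : W) : Prop :=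
  BruhatLE cs v u ∧ ∀ v', BruhatLE cs v' u → BruhatLE cs (v' * w) (v * w)

theorem IsBruhatGreatestMul.simple_mul {u w v : W} {i : B} (h : IsBruhatGreatestMul cs u w v)
    (hu : ℓ u < ℓ (s i * u)) (hvw : ℓ (v * w) < ℓ (s i * (v * w))) :
    IsBruhatGreatestMul cs (s i * u) w (s i * v) := by
  refine ⟨h.1.simple_mul_le_simple_mul hu, fun v' hv' => ?_⟩
  have hsu : ℓ (s i * (s i * u)) < ℓ (s i * u) := by rwa [cs.simple_mul_simple_cancel_left]
  rw [bruhatLE_iff_of_length_simple_mul_lt hsu, cs.simple_mul_simple_cancel_left] at hv'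
  rw [mul_assoc]
  rcases hv' with hv' | hv'
  · exact (h.2 v' hv').le_simple_mul hvw
  · simpa [mul_assoc, cs.simple_mul_simple_cancel_left] using
      (h.2 _ hv').simple_mul_le_simple_mul hvw

theorem IsBruhatGreatestMul.of_length_simple_mul_lt {u w v : W} {i : B}
    (h : IsBruhatGreatestMul cs u w v) (hu : ℓ u < ℓ (s i * u))
    (hvw : ℓ (s i * (v * w)) < ℓ (v * w)) : IsBruhatGreatestMul cs (s i * u) w v := by
  refine ⟨h.1.le_simple_mul hu, fun v' hv' => ?_⟩
  have hsu : ℓ (s i * (s i * u)) < ℓ (s i * u) := by rwa [cs.simple_mul_simple_cancel_left]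
  rw [bruhatLE_iff_of_length_simple_mul_lt hsu, cs.simple_mul_simple_cancel_left] at hv'
  rcases hv' with hv' | hv'
  · exact h.2 v' hv'
  · simpa [mul_assoc, simple_mul_bruhatLE_iff hvw] using h.2 _ hv'

theorem exists_isBruhatGreatestMul (w : W) {ω : List B} (hω : cs.IsReduced ω) :
    ∃ v, IsBruhatGreatestMul cs (π ω) w v ∧ ℓ (v * w) = ℓ w + ℓ v := by
  induction ω with
  | nil =>
    refine ⟨1, ⟨.refl 1, fun v hv => ?_⟩, by simp⟩
    have hv : ℓ v = 0 := by simpa using hv.length_le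
    rw [cs.length_eq_zero_iff.mp hv]
    exact .refl _
  | cons i ρ ih =>
    obtain ⟨hρ, hu⟩ := (cs.isReduced_cons_iff i ρ).mp hω
    obtain ⟨v, hv, hl⟩ := ih hρ
    rw [wordProd_cons]
    rcases cs.length_simple_mul (v * w) i with hvw | hvw
    · refine ⟨s i * v, hv.simple_mul hu (by omega), ?_⟩
      have h₁ := cs.length_mul_le (s i) v
      have h₂ := cs.length_mul_le (s i * v) w
      rw [cs.length_simple] at h₁
      rw [mul_assoc] at h₂ ⊢
      omega
    · exact ⟨v, hv.of_length_simple_mul_lt hu (by omega), hl⟩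

end Bruhat

/-- Lemma 1.4(2): the set `{v w ; v ≤ u}` contains a unique maximal element `y` for the
Bruhat order, and `ℓ(y) = ℓ(w) + ℓ(y w⁻¹)`. -/
theorem exists_unique_max_of_bruhat_interval_mul
    (cs : CoxeterSystem M W) (u w : W) :
    ∃ y : W, (∃ v : W, BruhatLE cs v u ∧ y = v * w) ∧
      (∀ z : W, (∃ v : W, BruhatLE cs v u ∧ z = v * w) → BruhatLE cs z y) ∧
      (∀ y' : W, (∃ v : W, BruhatLE cs v u ∧ y' = v * w) →
        (∀ z : W, (∃ v : W, BruhatLE cs v u ∧ z = v * w) → BruhatLE cs z y') → y' = y) ∧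
      cs.length y = cs.length w + cs.length (y * w⁻¹) := by
  obtain ⟨ω, hω, rfl⟩ := cs.exists_isReduced u
  obtain ⟨v, ⟨hv, hmax⟩, hlen⟩ := exists_isBruhatGreatestMul w hω
  refine ⟨v * w, ⟨v, hv, rfl⟩, ?_, ?_, by rwa [mul_inv_cancel_right]⟩
  · rintro _ ⟨v', hv', rfl⟩
    exact hmax v' hv'
  · rintro _ ⟨v', hv', rfl⟩ hmax'
    exact (hmax v' hv').antisymm (hmax' _ ⟨v, hv, rfl⟩)
end

section
/- Let W be a finite Coxeter group and σ an automorphism with σ(I) = I. Let O be a σ-twisted conjugacy class, w, v ∈ O both of minimal length in O, and suppose the statement (P1)–(P2) machinery holds (specifically: supp_σ(w)-cuspidality and minimality transfer). Then there exist x ∈ W^{supp_σ(w)} and w' ∈ W_{supp_σ(w)} with w' = b w σ(b)⁻¹ for some b ∈ W_{supp_σ(w)}, v = x w' σ(x)⁻¹, ℓ(w') = ℓ(v) = ℓ(w), and ℓ(x w') = ℓ(x) + ℓ(w'). In particular w' is elementarily strongly σ-conjugate to v. -/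
/-!
Write the conjugator of `v = y w σ(y)⁻¹` as `y = x b` with `b ∈ W_K`, `K = supp_σ(w)`, and `x` of
minimal length among all left factors arising this way; then `x` is a minimal representative of
`x W_K`. As `K` is `σ`-stable, `w' = b w σ(b)⁻¹` lies in `W_K`, hence `ℓ(x w') = ℓ(x) + ℓ(w')` and
`ℓ(v) ≥ ℓ(x w') - ℓ(σ(x)) ≥ ℓ(w') ≥ ℓ(w) = ℓ(v)`.

The additivity of `ℓ` on `W^K × W_K` rests on the exchange condition: a right inversion `t` of
`π ω` occurs in the right inversion sequence of `ω`. It comes from Tits' sign representation of `W`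
on `W × {±1}`, in which `π ω` flips the sign of `t` exactly when `t` occurs an odd number of times
in that sequence, so this parity depends only on `π ω`.
-/

open CoxeterSystem

variable {B W : Type*} [Group W] {M : CoxeterMatrix B}

/-- The support of `w`. -/
def Supp (cs : CoxeterSystem M W) (w : W) : Set B :=
  {i : B | ∃ ω : List B, cs.IsReduced ω ∧ w = cs.wordProd ω ∧ i ∈ ω}

/-- The `σ`-support `supp_σ(w) = ⋃_{n ≥ 0} σⁿ(supp(w))`, `σ` permuting `I` via `p`. -/
def SuppTw (cs : CoxeterSystem M W) (p : B ≃ B) (w : W) : Set B :=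
  ⋃ n : ℕ, (⇑p)^[n] '' Supp cs w

-- Replacing `(x, b)` by `(x * u, u⁻¹ * b)` with `u ∈ H` keeps the factorisation.
theorem exists_twisted_conjugator_factor_min {G F : Type*} [Group G] [FunLike F G G]
    [MonoidHomClass F G G] (H : Subgroup G) (σ : F) (f : G → ℕ) {v w y : G}
    (hv : v = y * w * (σ y)⁻¹) :
    ∃ x b : G, b ∈ H ∧ v = x * (b * w * (σ b)⁻¹) * (σ x)⁻¹ ∧ ∀ u ∈ H, f x ≤ f (x * u) := by
  obtain ⟨x, hx⟩ := exists_minimalFor_of_wellFoundedLT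
    (fun x => ∃ b ∈ H, v = x * (b * w * (σ b)⁻¹) * (σ x)⁻¹) f ⟨y, 1, H.one_mem, by simpa using hv⟩
  obtain ⟨b, hb, hvx⟩ := hx.1
  refine ⟨x, b, hb, hvx, fun u hu => hx.le ⟨u⁻¹ * b, H.mul_mem (H.inv_mem hu) hb, ?_⟩⟩
  rw [hvx]
  simp only [map_mul, map_inv, mul_inv_rev, inv_inv]
  group

namespace CoxeterSystem

theorem prod_map_alternatingWord {G : Type*} [Monoid G] (f : B → G) (i j : B) (k : ℕ) :
    ((alternatingWord i j (2 * k)).map f).prod = (f i * f j) ^ k := by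
  induction k with
  | zero => simp [alternatingWord]
  | succ k ih =>
    rw [show 2 * (k + 1) = 2 * k + 1 + 1 by ring, alternatingWord_succ', alternatingWord_succ']
    simp [ih, pow_succ', mul_assoc, parity_simps]

variable (cs : CoxeterSystem M W)

theorem leftInvSeq_eq_map_conj_rightInvSeq (ω : List B) :
    cs.leftInvSeq ω = (cs.rightInvSeq ω).map (MulAut.conj (cs.wordProd ω)) := by
  induction ω with
  | nil => rfl
  | cons i ω ih =>
    rw [leftInvSeq, rightInvSeq, ih, List.map_map, List.map_cons, wordProd_cons]
    congr 1
    · simp only [MulAut.conj_apply]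
      group
    · rw [map_mul, MulAut.coe_mul]

theorem rightInvSeq_append (α β : List B) :
    cs.rightInvSeq (α ++ β) =
      (cs.rightInvSeq α).map (MulAut.conj (cs.wordProd β)⁻¹) ++ cs.rightInvSeq β := by
  induction α with
  | nil => simp
  | cons i α ih =>
    rw [List.cons_append, rightInvSeq, rightInvSeq, ih, List.map_cons, List.cons_append,
      wordProd_append]
    congr 1
    simp only [MulAut.conj_apply, inv_inv, mul_inv_rev]
    group

section SignRepresentation

open scoped Classical

theorem leftInvSeq_alternatingWord (i j : B) (p : ℕ) :
    cs.leftInvSeq (alternatingWord i j (2 * p)) =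
      (List.range (2 * p)).map fun k => cs.simple i * (cs.simple j * cs.simple i) ^ k := by
  refine List.ext_getElem (by simp) fun k hk _ => ?_
  rw [getElem_leftInvSeq_alternatingWord cs i j p k (by simpa using hk),
    prod_alternatingWord_eq_mul_pow]
  simp [parity_simps, Nat.mul_add_div]

theorem even_count_leftInvSeq_braid (i j : B) (t : W) :
    Even ((cs.leftInvSeq (alternatingWord i j (2 * M i j))).count t) := by
  rw [leftInvSeq_alternatingWord, two_mul, List.range_add, List.map_append, List.map_map,
    List.count_append]
  have hperiod : ((fun k => cs.simple i * (cs.simple j * cs.simple i) ^ k) ∘ (M i j + ·)) =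
      fun k => cs.simple i * (cs.simple j * cs.simple i) ^ k := by
    funext k
    simp [pow_add]
  rw [hperiod]
  exact Even.add_self _

noncomputable def signPerm (i : B) : Equiv.Perm (W × ℤˣ) :=
  Function.Involutive.toPerm
    (fun x => (cs.simple i * x.1 * cs.simple i, if x.1 = cs.simple i then -x.2 else x.2))
    (by rintro ⟨t, ε⟩; by_cases h : t = cs.simple i <;> simp [h, mul_assoc, mul_eq_one_iff_eq_inv])

theorem signPerm_apply (i : B) (t : W) (ε : ℤˣ) :
    cs.signPerm i (t, ε) = (cs.simple i * t * cs.simple i, if t = cs.simple i then -ε else ε) :=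
  rfl

theorem prod_map_signPerm_apply (ω : List B) (t : W) (ε : ℤˣ) :
    (ω.map cs.signPerm).prod (t, ε) =
      (cs.wordProd ω * t * (cs.wordProd ω)⁻¹, (-1) ^ (cs.rightInvSeq ω).count t * ε) := by
  induction ω with
  | nil => simp
  | cons i ω ih =>
    rw [List.map_cons, List.prod_cons, Equiv.Perm.mul_apply, ih, signPerm_apply]
    have hiff : cs.wordProd ω * t * (cs.wordProd ω)⁻¹ = cs.simple i ↔
        (cs.wordProd ω)⁻¹ * cs.simple i * cs.wordProd ω = t := by
      constructor <;> intro h <;> simp [← h, mul_assoc]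
    simp only [rightInvSeq, List.count_cons, wordProd_cons, beq_iff_eq, hiff, mul_inv_rev,
      inv_simple, Prod.mk.injEq]
    refine ⟨by group, ?_⟩
    split_ifs <;> simp [pow_succ]

theorem isLiftable_signPerm : M.IsLiftable cs.signPerm := by
  intro i j
  ext1 ⟨t, ε⟩
  have hβ : cs.wordProd (alternatingWord i j (2 * M i j)) = 1 := by
    simp [prod_alternatingWord_eq_mul_pow]
  have hlis := cs.leftInvSeq_eq_map_conj_rightInvSeq (alternatingWord i j (2 * M i j))
  rw [hβ, map_one, MulAut.one_def, MulEquiv.coe_refl, List.map_id] at hlis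
  rw [← prod_map_alternatingWord, prod_map_signPerm_apply, hβ, ← hlis,
    (cs.even_count_leftInvSeq_braid i j t).neg_one_pow]
  simp

noncomputable def signRep : W →* Equiv.Perm (W × ℤˣ) :=
  cs.lift ⟨cs.signPerm, cs.isLiftable_signPerm⟩

theorem signRep_wordProd_apply (ω : List B) (t : W) (ε : ℤˣ) :
    cs.signRep (cs.wordProd ω) (t, ε) =
      (cs.wordProd ω * t * (cs.wordProd ω)⁻¹, (-1) ^ (cs.rightInvSeq ω).count t * ε) := by
  have hsimple : ⇑cs.signRep ∘ cs.simple = cs.signPerm :=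
    funext (cs.lift_apply_simple cs.isLiftable_signPerm)
  rw [← prod_map_signPerm_apply, ← hsimple, ← List.map_map, ← map_list_prod, wordProd]

noncomputable def inversionSign (w t : W) : ℤˣ :=
  (cs.signRep w (t, 1)).2

theorem signRep_apply (w t : W) (ε : ℤˣ) :
    cs.signRep w (t, ε) = (w * t * w⁻¹, cs.inversionSign w t * ε) := by
  obtain ⟨ω, rfl⟩ := cs.wordProd_surjective w
  simp [inversionSign, signRep_wordProd_apply]

theorem inversionSign_wordProd (ω : List B) (t : W) :
    cs.inversionSign (cs.wordProd ω) t = (-1) ^ (cs.rightInvSeq ω).count t := by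
  simp [inversionSign, signRep_wordProd_apply]

theorem inversionSign_one (t : W) : cs.inversionSign 1 t = 1 := by
  simp [inversionSign]

theorem inversionSign_mul (u v t : W) :
    cs.inversionSign (u * v) t = cs.inversionSign u (v * t * v⁻¹) * cs.inversionSign v t := by
  conv_lhs => rw [inversionSign, map_mul, Equiv.Perm.mul_apply, signRep_apply, signRep_apply]
  simp

theorem inversionSign_simple_self (i : B) :
    cs.inversionSign (cs.simple i) (cs.simple i) = -1 := by
  simp [← wordProd_singleton, inversionSign_wordProd]

theorem inversionSign_self_of_isReflection {t : W} (ht : cs.IsReflection t) :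
    cs.inversionSign t t = -1 := by
  obtain ⟨v, i, rfl⟩ := ht
  have hinv :
      cs.inversionSign v (cs.simple i) * cs.inversionSign v⁻¹ (v * cs.simple i * v⁻¹) = 1 := by
    have := cs.inversionSign_mul v v⁻¹ (v * cs.simple i * v⁻¹)
    rw [mul_inv_cancel, inversionSign_one] at this
    simpa [mul_assoc] using this.symm
  have hconj : v⁻¹ * (v * cs.simple i * v⁻¹) * v⁻¹⁻¹ = cs.simple i := by group
  rw [inversionSign_mul, inversionSign_mul, hconj, inversionSign_simple_self,
    mul_inv_cancel_right, mul_neg_one, neg_mul, hinv]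

theorem mem_rightInvSeq_of_isRightInversion (ω : List B) {t : W}
    (ht : cs.IsRightInversion (cs.wordProd ω) t) : t ∈ cs.rightInvSeq ω := by
  obtain ⟨ω', hω', hω't⟩ := cs.exists_isReduced (cs.wordProd ω * t)
  have hnotMem : t ∉ cs.rightInvSeq ω' := fun hmem => by
    have := (cs.isRightInversion_of_mem_rightInvSeq hω' hmem).2
    rw [← hω't, mul_assoc, ht.1.mul_self, mul_one] at this
    exact lt_asymm ht.2 this
  have hsign : (-1 : ℤˣ) ^ (cs.rightInvSeq ω).count t = -1 := by
    rw [← inversionSign_wordProd,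
      show cs.wordProd ω = cs.wordProd ω * t * t by rw [mul_assoc, ht.1.mul_self, mul_one],
      inversionSign_mul, inversionSign_self_of_isReflection cs ht.1, hω't,
      ht.1.inv, ht.1.mul_self, one_mul, inversionSign_wordProd, List.count_eq_zero.mpr hnotMem]
    simp
  rw [← List.count_pos_iff]
  exact ((neg_one_pow_eq_neg_one_iff_odd (by decide)).mp hsign).pos

end SignRepresentation

def parabolicSubgroup (K : Set B) : Subgroup W :=
  Subgroup.closure (cs.simple '' K)

theorem wordProd_mem_parabolicSubgroup {K : Set B} {ω : List B} (hω : ∀ i ∈ ω, i ∈ K) :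
    cs.wordProd ω ∈ cs.parabolicSubgroup K :=
  Subgroup.list_prod_mem _ fun _ hs => by
    obtain ⟨i, hi, rfl⟩ := List.mem_map.mp hs
    exact Subgroup.subset_closure ⟨i, hω i hi, rfl⟩

theorem exists_isReduced_mul_simple {K : Set B} {ω : List B} (hω : cs.IsReduced ω)
    (hωK : ∀ j ∈ ω, j ∈ K) {i : B} (hi : i ∈ K) :
    ∃ ω' : List B, cs.IsReduced ω' ∧ (∀ j ∈ ω', j ∈ K) ∧
      cs.wordProd ω * cs.simple i = cs.wordProd ω' := by
  rcases cs.length_mul_simple (cs.wordProd ω) i with hlong | hshort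
  · refine ⟨ω ++ [i], ?_, by simpa [or_imp, forall_and] using And.intro hωK hi,
      by rw [wordProd_append, wordProd_singleton]⟩
    rw [IsReduced, wordProd_append, wordProd_singleton, hlong, hω.eq, List.length_append,
      List.length_singleton]
  · have hinv : cs.IsRightInversion (cs.wordProd ω) (cs.simple i) :=
      ⟨cs.isReflection_simple i, by omega⟩
    obtain ⟨j, hj, hjs⟩ := List.getElem_of_mem (cs.mem_rightInvSeq_of_isRightInversion ω hinv)
    have hprod : cs.wordProd ω * cs.simple i = cs.wordProd (ω.eraseIdx j) := by
      rw [← hjs, ← List.getD_eq_getElem _ 1, wordProd_mul_getD_rightInvSeq]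
    refine ⟨ω.eraseIdx j, ?_, fun k hk => hωK k (List.mem_of_mem_eraseIdx hk), hprod⟩
    rw [length_rightInvSeq] at hj
    rw [IsReduced, ← hprod, List.length_eraseIdx_of_lt hj, ← hω.eq]
    omega

theorem exists_isReduced_of_mem_parabolicSubgroup {K : Set B} {u : W}
    (hu : u ∈ cs.parabolicSubgroup K) :
    ∃ ω : List B, cs.IsReduced ω ∧ (∀ i ∈ ω, i ∈ K) ∧ u = cs.wordProd ω := by
  induction hu using Subgroup.closure_induction_right with
  | one => exact ⟨[], by simp [IsReduced], by simp, rfl⟩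
  | mul_right u _ s hs ih =>
    obtain ⟨i, hi, rfl⟩ := hs
    obtain ⟨ω, hω, hωK, rfl⟩ := ih
    exact cs.exists_isReduced_mul_simple hω hωK hi
  | mul_inv_cancel u _ s hs ih =>
    obtain ⟨i, hi, rfl⟩ := hs
    obtain ⟨ω, hω, hωK, rfl⟩ := ih
    rw [inv_simple]
    exact cs.exists_isReduced_mul_simple hω hωK hi

theorem length_mul_wordProd_of_forall_length_le_mul {K : Set B} {x : W}
    (hx : ∀ u ∈ cs.parabolicSubgroup K, cs.length x ≤ cs.length (x * u))
    {ω : List B} (hω : cs.IsReduced ω) (hωK : ∀ i ∈ ω, i ∈ K) :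
    cs.length (x * cs.wordProd ω) = cs.length x + ω.length := by
  induction ω using List.reverseRecOn with
  | nil => simp
  | append_singleton ω i ih =>
    have hωred : cs.IsReduced ω := by simpa using hω.take ω.length
    have hωK' : ∀ j ∈ ω, j ∈ K := fun j hj => hωK j (by simp [hj])
    rw [wordProd_append, wordProd_singleton, ← mul_assoc, List.length_append,
      List.length_singleton, ← add_assoc, ← ih hωred hωK']
    refine (cs.length_mul_simple _ i).resolve_right fun hshort => ?_
    obtain ⟨α, hα, rfl⟩ := cs.exists_isReduced x
    -- The inversion `s i` of `π (α ++ ω)` comes either from `α`, giving a shorter element of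
    -- `x W_K`, or from `ω`, contradicting that `ω ++ [i]` is reduced.
    have hmem := cs.mem_rightInvSeq_of_isRightInversion (α ++ ω)
      ⟨cs.isReflection_simple i, by rw [wordProd_append]; omega⟩
    rw [rightInvSeq_append, List.mem_append, List.mem_map] at hmem
    rcases hmem with ⟨r, hr, hri⟩ | hmem
    · have hrK : r ∈ cs.parabolicSubgroup K := by
        have hω' := cs.wordProd_mem_parabolicSubgroup hωK'
        rw [MulAut.conj_apply, inv_inv] at hri
        rw [show r = cs.wordProd ω * cs.simple i * (cs.wordProd ω)⁻¹ by rw [← hri]; group]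
        exact mul_mem (mul_mem hω' (Subgroup.subset_closure ⟨i, hωK i (by simp), rfl⟩))
          (inv_mem hω')
      exact absurd (hx r hrK) (not_le.mpr (cs.isRightInversion_of_mem_rightInvSeq hα hr).2)
    · have hlt := (cs.isRightInversion_of_mem_rightInvSeq hωred hmem).2
      have hlen := hω.eq
      rw [wordProd_append, wordProd_singleton, List.length_append, List.length_singleton] at hlen
      have := cs.length_wordProd_le ω
      omega

theorem length_mul_of_forall_length_le_mul {K : Set B} {x u : W}
    (hx : ∀ u ∈ cs.parabolicSubgroup K, cs.length x ≤ cs.length (x * u))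
    (hu : u ∈ cs.parabolicSubgroup K) :
    cs.length (x * u) = cs.length x + cs.length u := by
  obtain ⟨ω, hω, hωK, rfl⟩ := cs.exists_isReduced_of_mem_parabolicSubgroup hu
  rw [cs.length_mul_wordProd_of_forall_length_le_mul hx hω hωK, hω.eq]

variable {B' W' : Type*} [Group W'] {M' : CoxeterMatrix B'} (cs' : CoxeterSystem M' W')
  {F : Type*} [FunLike F W W'] [MonoidHomClass F W W']

theorem map_wordProd_of_map_simple {f : F} {p : B → B'}
    (hf : ∀ i, f (cs.simple i) = cs'.simple (p i)) (ω : List B) :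
    f (cs.wordProd ω) = cs'.wordProd (ω.map p) := by
  simp only [wordProd, map_list_prod, List.map_map]
  congr 1
  exact List.map_congr_left fun i _ => hf i

theorem length_map_le_of_map_simple {f : F} {p : B → B'}
    (hf : ∀ i, f (cs.simple i) = cs'.simple (p i)) (w : W) :
    cs'.length (f w) ≤ cs.length w := by
  obtain ⟨ω, hω, rfl⟩ := cs.exists_isReduced w
  rw [map_wordProd_of_map_simple cs cs' hf, hω.eq]
  simpa using cs'.length_wordProd_le (ω.map p)

theorem map_mem_parabolicSubgroup_of_map_simple {f : F} {p : B → B'}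
    (hf : ∀ i, f (cs.simple i) = cs'.simple (p i)) {K : Set B} {K' : Set B'}
    (hp : Set.MapsTo p K K') {u : W} (hu : u ∈ cs.parabolicSubgroup K) :
    f u ∈ cs'.parabolicSubgroup K' := by
  obtain ⟨ω, -, hωK, rfl⟩ := cs.exists_isReduced_of_mem_parabolicSubgroup hu
  rw [map_wordProd_of_map_simple cs cs' hf]
  exact cs'.wordProd_mem_parabolicSubgroup fun i hi => by
    obtain ⟨j, hj, rfl⟩ := List.mem_map.mp hi
    exact hp (hωK j hj)

end CoxeterSystem

theorem subset_suppTw (cs : CoxeterSystem M W) (p : B ≃ B) (w : W) :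
    Supp cs w ⊆ SuppTw cs p w :=
  fun i hi => Set.mem_iUnion.mpr ⟨0, i, hi, rfl⟩

theorem mapsTo_suppTw (cs : CoxeterSystem M W) (p : B ≃ B) (w : W) :
    Set.MapsTo p (SuppTw cs p w) (SuppTw cs p w) := fun _ hj => by
  obtain ⟨n, i, hi, rfl⟩ := Set.mem_iUnion.mp hj
  exact Set.mem_iUnion.mpr ⟨n + 1, i, hi, Function.iterate_succ_apply' _ _ _⟩

theorem mem_parabolicSubgroup_suppTw (cs : CoxeterSystem M W) (p : B ≃ B) (w : W) :
    w ∈ cs.parabolicSubgroup (SuppTw cs p w) := by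
  obtain ⟨ω, hω, rfl⟩ := cs.exists_isReduced w
  exact cs.wordProd_mem_parabolicSubgroup fun i hi => subset_suppTw cs p _ ⟨ω, hω, rfl, hi⟩

theorem min_length_elements_elementarily_strongly_conjugate_general
    (cs : CoxeterSystem M W)
    (σ : W ≃* W) (p : B ≃ B) (hp : ∀ i : B, σ (cs.simple i) = cs.simple (p i))
    (w v : W)
    (hconj : ∃ y : W, v = y * w * (σ y)⁻¹)
    (hwmin : ∀ y : W, cs.length w ≤ cs.length (y * w * (σ y)⁻¹))
    (hvmin : ∀ y : W, cs.length v ≤ cs.length (y * w * (σ y)⁻¹)) :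
    ∃ x b : W,
      (∀ u ∈ Subgroup.closure (cs.simple '' SuppTw cs p w),
        cs.length x ≤ cs.length (x * u)) ∧
      b ∈ Subgroup.closure (cs.simple '' SuppTw cs p w) ∧
      ∃ w' : W, w' = b * w * (σ b)⁻¹ ∧
        w' ∈ Subgroup.closure (cs.simple '' SuppTw cs p w) ∧
        v = x * w' * (σ x)⁻¹ ∧
        cs.length w' = cs.length v ∧ cs.length v = cs.length w ∧
        cs.length (x * w') = cs.length x + cs.length w' := by
  set H := cs.parabolicSubgroup (SuppTw cs p w)
  obtain ⟨y, hy⟩ := hconj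
  obtain ⟨x, b, hb, hv, hx⟩ := exists_twisted_conjugator_factor_min H σ cs.length hy
  have hw' : b * w * (σ b)⁻¹ ∈ H :=
    H.mul_mem (H.mul_mem hb (mem_parabolicSubgroup_suppTw cs p w)) (H.inv_mem
      (cs.map_mem_parabolicSubgroup_of_map_simple cs hp (mapsTo_suppTw cs p w) hb))
  have hadd := cs.length_mul_of_forall_length_le_mul hx hw'
  have hvw : cs.length v = cs.length w := le_antisymm (by simpa using hvmin 1) (hy ▸ hwmin y)
  have hw'v : cs.length (b * w * (σ b)⁻¹) ≤ cs.length v := by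
    have := cs.length_le_length_mul_add_right (x * (b * w * (σ b)⁻¹)) (σ x)⁻¹
    rw [← hv, cs.length_inv, hadd] at this
    have := cs.length_map_le_of_map_simple cs hp x
    omega
  exact ⟨x, b, hx, hb, _, rfl, hw', hv, le_antisymm hw'v (hvw ▸ hwmin b), hvw, hadd⟩

/-- Theorem 7.6(b): let `W` be a finite Coxeter group, `σ` an automorphism with
`σ(I) = I`, and `w, v` minimal length elements of a common `σ`-twisted conjugacy class.
Then there are `x ∈ W^{supp_σ(w)}` and `w' = b w σ(b)⁻¹ ∈ W_{supp_σ(w)}` (with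
`b ∈ W_{supp_σ(w)}`) such that `v = x w' σ(x)⁻¹`, `ℓ(w') = ℓ(v) = ℓ(w)` and
`ℓ(x w') = ℓ(x) + ℓ(w')`; in particular `w'` is elementarily strongly `σ`-conjugate
to `v`. -/
theorem min_length_elements_elementarily_strongly_conjugate
    [Finite W] (cs : CoxeterSystem M W)
    (σ : W ≃* W) (p : B ≃ B) (hp : ∀ i : B, σ (cs.simple i) = cs.simple (p i))
    (w v : W)
    (hconj : ∃ y : W, v = y * w * (σ y)⁻¹)
    (hwmin : ∀ y : W, cs.length w ≤ cs.length (y * w * (σ y)⁻¹))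
    (hvmin : ∀ y : W, cs.length v ≤ cs.length (y * w * (σ y)⁻¹)) :
    ∃ x b : W,
      (∀ u ∈ Subgroup.closure (cs.simple '' SuppTw cs p w),
        cs.length x ≤ cs.length (x * u)) ∧
      b ∈ Subgroup.closure (cs.simple '' SuppTw cs p w) ∧
      ∃ w' : W, w' = b * w * (σ b)⁻¹ ∧
        w' ∈ Subgroup.closure (cs.simple '' SuppTw cs p w) ∧
        v = x * w' * (σ x)⁻¹ ∧
        cs.length w' = cs.length v ∧ cs.length v = cs.length w ∧
        cs.length (x * w') = cs.length x + cs.length w' :=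
  min_length_elements_elementarily_strongly_conjugate_general cs σ p hp w v hconj hwmin hvmin
end
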